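/- arXiv:1108.6309 — 2 statements merged into one kernel-verified Lean document; each statement's English description precedes it below -/
import Mathlib

section
/- Let T be a triangulated category with arbitrary small coproducts and let P be a compact generator of T. If F is an object of T such that the graded right Λ-module π_*F is projective, then for every object X of T the map Hom_T(F, X) → Hom_Λ(π_*F, π_*X), given by applying π_* (i.e. sending f to π_*f), is bijective. -/
/-!
Shared setup: a triangulated category `C` with (co)products, a compact generator `P`,
the graded endomorphism ring `Λ = End_T(P)_* = Hom_T(Σ^* P, P)` and its category of
graded right modules, realized concretely.
-/

set_option linter.unusedSectionVars false

open CategoryTheory CategoryTheory.Limits CategoryTheory.Pretriangulated DirectSum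

universe v u

namespace Franke

variable {C : Type u} [Category.{v} C] [Preadditive C] [HasZeroObject C]
  [HasShift C ℤ] [∀ n : ℤ, (shiftFunctor C n).Additive] [Pretriangulated C]

/-- The degree `k` component of the graded endomorphism ring
`Λ = End_T(P)_* = Hom_T(Σ^* P, P)`: its degree `k` part is `Hom(P⟦k⟧, P)`. -/
abbrev lam (P : C) (k : ℤ) : Type v := (P⟦k⟧ ⟶ P)

/-- The right action of a degree `k` element `a : Σᵏ P ⟶ P` of `Λ` on a degree `n`
element `m : Σⁿ P ⟶ X` of the graded hom `π_* X = Hom_T(Σ^* P, X)`; the result is the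
degree `n + k` element `Σ^{n+k} P ≅ (Σᵏ P)⟦n⟧ → Σⁿ P → X`. -/
def gsmulHom (P : C) {X : C} {n k l : ℤ} (h : n + k = l)
    (m : P⟦n⟧ ⟶ X) (a : lam P k) : P⟦l⟧ ⟶ X :=
  (shiftFunctorAdd' C k n l (by omega)).hom.app P ≫ a⟦n⟧' ≫ m

/-- The multiplication of the graded endomorphism ring `Λ = End_T(P)_*`. -/
def gmul (P : C) {j k l : ℤ} (h : j + k = l) (a : lam P j) (b : lam P k) : lam P l :=
  gsmulHom P h a b

/-- The unit `1 ∈ Λ₀ = Hom(Σ⁰P, P)` of the graded endomorphism ring. -/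
def gone (P : C) : lam P 0 := (shiftFunctorZero C ℤ).hom.app P

/-- A ℤ-graded right module over the graded endomorphism ring `Λ = End_T(P)_*`.
The action is indexed by proofs `n + k = l` in order to avoid transport along
equalities of degrees. -/
structure GradedModule (P : C) where
  M : ℤ → Type v
  [acg : ∀ n, AddCommGroup (M n)]
  smul : ∀ {n k l : ℤ}, n + k = l → M n → lam P k → M l
  smul_addₓ : ∀ {n k l : ℤ} (h : n + k = l) (m : M n) (a b : lam P k),
    smul h m (a + b) = smul h m a + smul h m b
  add_smulₓ : ∀ {n k l : ℤ} (h : n + k = l) (m m' : M n) (a : lam P k),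
    smul h (m + m') a = smul h m a + smul h m' a
  smul_oneₓ : ∀ {n : ℤ} (m : M n), smul (add_zero n) m (gone P) = m
  smul_mulₓ : ∀ {n j k nj jk njk : ℤ} (h₁ : n + j = nj) (h₂ : j + k = jk)
    (h₃ : nj + k = njk) (h₄ : n + jk = njk) (m : M n) (a : lam P j) (b : lam P k),
    smul h₃ (smul h₁ m a) b = smul h₄ m (gmul P h₂ a b)

attribute [instance] GradedModule.acg

/-- The action of a fixed `a : Λₖ` as an additive map `Mₙ →+ M_{n+k}`. -/
def GradedModule.smulAddHom {P : C} (M : GradedModule P) {n k l : ℤ} (h : n + k = l)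
    (a : lam P k) : M.M n →+ M.M l :=
  AddMonoidHom.mk' (fun m => M.smul h m a) (fun m m' => M.add_smulₓ h m m' a)

theorem GradedModule.zero_smulₓ {P : C} (M : GradedModule P) {n k l : ℤ} (h : n + k = l)
    (a : lam P k) : M.smul h (0 : M.M n) a = 0 :=
  map_zero (M.smulAddHom h a)

/-- `π_* X = Hom_T(Σ^* P, X)` as a graded right `Λ`-module. -/
@[reducible] def piMod (P X : C) : GradedModule P where
  M n := P⟦n⟧ ⟶ X
  smul h m a := gsmulHom P h m a
  smul_addₓ h m a b := by
    simp [gsmulHom, Functor.map_add, Preadditive.comp_add, Preadditive.add_comp]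
  add_smulₓ h m m' a := by
    simp [gsmulHom, Preadditive.comp_add]
  smul_oneₓ m := by
    simp only [gsmulHom, gone]
    rw [shiftFunctorAdd'_zero_add_hom_app, ← Functor.map_comp_assoc, Iso.inv_hom_id_app]
    simp
  smul_mulₓ {n j k nj jk njk} h₁ h₂ h₃ h₄ m a b := by
    simp only [gsmulHom, gmul, Functor.map_comp, Category.assoc]
    have nat := ((shiftFunctorAdd' C j n nj (by omega)).hom).naturality b
    dsimp at nat
    rw [reassoc_of% nat]
    rw [← shiftFunctorAdd'_assoc_hom_app_assoc k j n jk nj njk (by omega) (by omega)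
      (by omega) P]


/-- A morphism of graded right `Λ`-modules: a degree-preserving `Λ`-linear additive map. -/
structure GHom {P : C} (M N : GradedModule P) where
  app : ∀ n : ℤ, M.M n →+ N.M n
  app_smul : ∀ {n k l : ℤ} (h : n + k = l) (m : M.M n) (a : lam P k),
    app l (M.smul h m a) = N.smul h (app n m) a

@[ext] theorem GHom.ext {P : C} {M N : GradedModule P} {f g : GHom M N}
    (h : ∀ (n : ℤ) (x : M.M n), f.app n x = g.app n x) : f = g := by
  obtain ⟨fa, _⟩ := f; obtain ⟨ga, _⟩ := g
  congr 1
  funext n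
  exact AddMonoidHom.ext (h n)

/-- The identity morphism of graded modules. -/
def GHom.id {P : C} (M : GradedModule P) : GHom M M :=
  ⟨fun _ => AddMonoidHom.id _, fun _ _ _ => rfl⟩

/-- Composition of morphisms of graded modules. -/
def GHom.comp {P : C} {M N K : GradedModule P} (g : GHom N K) (f : GHom M N) : GHom M K :=
  ⟨fun n => (g.app n).comp (f.app n), fun h m a => by
    simp only [AddMonoidHom.comp_apply, f.app_smul, g.app_smul]⟩

instance {P : C} {M N : GradedModule P} : Zero (GHom M N) :=
  ⟨{ app := fun _ => 0
     app_smul := fun h m a => by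
       show (0 : N.M _) = N.smul h (0 : N.M _) a
       exact (N.zero_smulₓ h a).symm }⟩

@[simp] theorem GHom.zero_app {P : C} {M N : GradedModule P} (n : ℤ) (x : M.M n) :
    (0 : GHom M N).app n x = 0 := rfl

/-- An isomorphism of graded right `Λ`-modules. -/
structure GIso {P : C} (M N : GradedModule P) where
  hom : GHom M N
  inv : GHom N M
  hom_inv_id : inv.comp hom = GHom.id M
  inv_hom_id : hom.comp inv = GHom.id N

/-- The shift `M[k]` of a graded module, with `M[k]ₙ = M_{n-k}`. -/
@[reducible] def gshift {P : C} (k : ℤ) (M : GradedModule P) : GradedModule P where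
  M n := M.M (n - k)
  smul h m a := M.smul (by omega) m a
  smul_addₓ h m a b := M.smul_addₓ _ m a b
  add_smulₓ h m m' a := M.add_smulₓ _ m m' a
  smul_oneₓ m := M.smul_oneₓ m
  smul_mulₓ h₁ h₂ h₃ h₄ m a b := M.smul_mulₓ _ h₂ _ _ m a b

/-- Surjectivity (in each degree) of a morphism of graded modules. -/
def GHom.Surj {P : C} {M N : GradedModule P} (f : GHom M N) : Prop :=
  ∀ n : ℤ, Function.Surjective (f.app n)

/-- A pair of composable morphisms of graded modules `0 → Z → E → B → 0`
forming a short exact sequence. -/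
structure IsShortExact {P : C} {Z E B : GradedModule P} (ι : GHom Z E) (ρ : GHom E B) : Prop where
  mono : ∀ n : ℤ, Function.Injective (ι.app n)
  epi : ∀ n : ℤ, Function.Surjective (ρ.app n)
  exact : ∀ (n : ℤ) (x : E.M n), ρ.app n x = 0 ↔ x ∈ Set.range (ι.app n)

/-- Exactness of `M → N → K` at `N` (including that the composite vanishes). -/
def ExactPair {P : C} {M N K : GradedModule P} (f : GHom M N) (g : GHom N K) : Prop :=
  ∀ (n : ℤ) (x : N.M n), g.app n x = 0 ↔ x ∈ Set.range (f.app n)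

/-- A graded module is projective if every degreewise surjection onto it splits against
any map from it: the usual lifting property. -/
def IsProjective {P : C} (Q : GradedModule P) : Prop :=
  ∀ (A B : GradedModule P) (e : GHom A B), e.Surj →
    ∀ f : GHom Q B, ∃ g : GHom Q A, e.comp g = f

/-- `projDimLE d M` says that the graded module `M` admits a projective resolution of
length at most `d`, i.e. has projective dimension `≤ d`. -/
def projDimLE {P : C} : ℕ → GradedModule P → Prop
  | 0, M => IsProjective M
  | d + 1, M => ∃ (F K : GradedModule P) (ε : GHom F M) (ι : GHom K F),
      IsProjective F ∧ IsShortExact ι ε ∧ projDimLE d K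

/-- `Λ = End_T(P)_*` is `N`-sparse: concentrated in degrees divisible by `N`. -/
def Sparse (P : C) (N : ℕ) : Prop :=
  ∀ k : ℤ, ¬ ((N : ℤ) ∣ k) → ∀ a : lam P k, a = 0

/-- A graded module belongs to `B[i]`: it is concentrated in degrees congruent
to `i` modulo `N`. -/
def InDegrees {P : C} (N : ℕ) (i : ZMod N) (M : GradedModule P) : Prop :=
  ∀ n : ℤ, (n : ZMod N) ≠ i → ∀ x : M.M n, x = 0

/-- The canonical comparison map `⊕ᵢ Hom(P, Xᵢ) → Hom(P, ∐ᵢ Xᵢ)`. -/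
noncomputable def compactComparison [HasCoproducts.{v} C] (P : C) {ι : Type v} (X : ι → C) :
    (⨁ i, (P ⟶ X i)) →+ (P ⟶ ∐ X) := by
  classical
  exact DirectSum.toAddMonoid fun i =>
    AddMonoidHom.mk' (fun f => f ≫ Sigma.ι X i) (fun f g => Preadditive.add_comp _ _ _ _ _ _)

/-- `P` is a compact object: `Hom(P, −)` commutes with small coproducts. -/
def IsCompactObj [HasCoproducts.{v} C] (P : C) : Prop :=
  ∀ (ι : Type v) (X : ι → C), Function.Bijective (compactComparison P X)

/-- `P` is a generator: an object all of whose graded homs from `P` vanish is zero. -/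
def IsGenerator (P : C) : Prop :=
  ∀ X : C, (∀ (n : ℤ) (f : P⟦n⟧ ⟶ X), f = 0) → IsZero X

/-- The morphism of graded modules `π_* f : π_* X → π_* Y` induced by `f : X ⟶ Y`. -/
def piGHom (P : C) {X Y : C} (f : X ⟶ Y) : GHom (piMod P X) (piMod P Y) where
  app n := AddMonoidHom.mk' (fun u => u ≫ f) fun u v => Preadditive.add_comp _ _ _ _ _ _
  app_smul h m a := by
    show (gsmulHom P h m a) ≫ f = gsmulHom P h (m ≫ f) a
    simp [gsmulHom]

/-- An extension of `B` by `Z` in the category of graded right `Λ`-modules: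
  a short exact sequence `0 → Z → E → B → 0`. -/
structure GExtension {P : C} (B Z : GradedModule P) where
  E : GradedModule P
  ι : GHom Z E
  ρ : GHom E B
  shortExact : IsShortExact ι ρ

/-- Two extensions are identified if there is a morphism of extensions between them
(such a morphism is automatically an isomorphism). -/
def GExtension.Rel {P : C} {B Z : GradedModule P} (e e' : GExtension B Z) : Prop :=
  ∃ φ : GHom e.E e'.E, φ.comp e.ι = e'.ι ∧ e'.ρ.comp φ = e.ρ

/-- `Ext¹_Λ(B, Z)`, realized as the set of equivalence classes of extensions
`0 → Z → E → B → 0` of graded right `Λ`-modules. -/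
def Ext1 {P : C} (B Z : GradedModule P) : Type _ :=
  Quot (GExtension.Rel (B := B) (Z := Z))

/-- Given `δ : Cc ⟶ ΣX`, the induced morphism of graded modules
`π_* Cc → (π_* X)[1]`, using the canonical identification `π_*(ΣX) ≅ (π_*X)[1]`. -/
noncomputable def triangleConnect (P : C) {X Cc : C} (δ : Cc ⟶ X⟦(1:ℤ)⟧) :
    GHom (piMod P Cc) (gshift 1 (piMod P X)) where
  app n := AddMonoidHom.mk' (fun u =>
    (shiftFunctorAdd' C n (-1) (n-1) (by omega)).hom.app P ≫ (u ≫ δ)⟦(-1:ℤ)⟧' ≫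
      (shiftFunctorCompIsoId C (1:ℤ) (-1) (by omega)).hom.app X) (fun u v => by
        simp [Preadditive.add_comp, Preadditive.comp_add, Functor.map_add])
  app_smul {n k l} h m a := by
    simp only [AddMonoidHom.mk'_apply]
    show (shiftFunctorAdd' C l (-1) (l-1) (by omega)).hom.app P ≫
        ((gsmulHom P h m a) ≫ δ)⟦(-1:ℤ)⟧' ≫
          (shiftFunctorCompIsoId C (1:ℤ) (-1) (by omega)).hom.app X =
      gsmulHom P (show (n-1) + k = l - 1 by omega)
        ((shiftFunctorAdd' C n (-1) (n-1) (by omega)).hom.app P ≫ (m ≫ δ)⟦(-1:ℤ)⟧' ≫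
          (shiftFunctorCompIsoId C (1:ℤ) (-1) (by omega)).hom.app X) a
    simp only [gsmulHom, Functor.map_comp, Category.assoc]
    have nat := ((shiftFunctorAdd' C n (-1) (n-1) (by omega : n + -1 = n - 1)).hom).naturality a
    dsimp at nat
    rw [reassoc_of% nat]
    rw [shiftFunctorAdd'_assoc_hom_app_assoc k n (-1) l (n-1) (l-1) (by omega) (by omega)
      (by omega) P]

section ExtGroups

instance {P : C} {M N : GradedModule P} : Add (GHom M N) :=
  ⟨fun f g =>
    { app := fun n => f.app n + g.app n
      app_smul := fun {n k l} h m a => by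
        show f.app l _ + g.app l _ = N.smul h (f.app n m + g.app n m) a
        rw [f.app_smul, g.app_smul, N.add_smulₓ] }⟩

instance {P : C} {M N : GradedModule P} : Neg (GHom M N) :=
  ⟨fun f =>
    { app := fun n => -(f.app n)
      app_smul := fun {n k l} h m a => by
        show -(f.app l _) = N.smul h (-(f.app n m)) a
        rw [f.app_smul]
        exact (map_neg (N.smulAddHom h a) _).symm }⟩

@[simp] theorem GHom.add_app {P : C} {M N : GradedModule P} (f g : GHom M N) (n : ℤ)
    (x : M.M n) : (f + g).app n x = f.app n x + g.app n x := rfl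

@[simp] theorem GHom.neg_app {P : C} {M N : GradedModule P} (f : GHom M N) (n : ℤ)
    (x : M.M n) : (-f).app n x = -(f.app n x) := rfl

instance {P : C} {M N : GradedModule P} : AddCommGroup (GHom M N) where
  add := (· + ·)
  zero := 0
  neg := Neg.neg
  add_assoc f g h := by ext n x; simp [add_assoc]
  zero_add f := by ext n x; simp
  add_zero f := by ext n x; simp
  add_comm f g := by ext n x; simp [add_comm]
  neg_add_cancel f := by ext n x; simp
  nsmul := nsmulRec
  zsmul := zsmulRec

/-- A projective resolution `⋯ → F₂ → F₁ → F₀ → B → 0` of a graded right `Λ`-module. -/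
structure ProjResolution {P : C} (B : GradedModule P) where
  F : ℕ → GradedModule P
  d : ∀ i : ℕ, GHom (F (i + 1)) (F i)
  aug : GHom (F 0) B
  projective : ∀ i, IsProjective (F i)
  aug_surjective : ∀ n : ℤ, Function.Surjective (aug.app n)
  exact_aug : ∀ (n : ℤ) (x : (F 0).M n), aug.app n x = 0 ↔ x ∈ Set.range ((d 0).app n)
  exact_d : ∀ (i : ℕ) (n : ℤ) (x : (F (i + 1)).M n),
    (d i).app n x = 0 ↔ x ∈ Set.range ((d (i + 1)).app n)

/-- The differential of the cochain complex `Hom_Λ(F_•, Z)` obtained by applying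
`Hom_Λ(−, Z)` to a projective resolution `F_•`. -/
def cochainD {P : C} {B : GradedModule P} (R : ProjResolution B) (Z : GradedModule P)
    (i : ℕ) : GHom (R.F i) Z →+ GHom (R.F (i + 1)) Z :=
  AddMonoidHom.mk' (fun f => f.comp (R.d i)) (fun f g => by ext n x; rfl)

/-- `Ext^{j+1}_Λ(B, Z)`, computed as the `(j+1)`-st cohomology
`ker(Hom(F_{j+1}, Z) → Hom(F_{j+2}, Z)) / im(Hom(F_j, Z) → Hom(F_{j+1}, Z))`
of the complex `Hom_Λ(F_•, Z)` for a projective resolution `F_• → B`. -/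
def extGroup {P : C} {B : GradedModule P} (R : ProjResolution B) (Z : GradedModule P)
    (j : ℕ) : Type v :=
  AddMonoidHom.ker (cochainD R Z (j + 1)) ⧸
    (AddMonoidHom.range (cochainD R Z j)).addSubgroupOf
      (AddMonoidHom.ker (cochainD R Z (j + 1)))

noncomputable instance {P : C} {B : GradedModule P} (R : ProjResolution B)
    (Z : GradedModule P) (j : ℕ) : AddCommGroup (extGroup R Z j) := by
  dsimp [extGroup]; infer_instance

end ExtGroups
section DG

/-- A differential graded right module over `Λ = End_T(P)_*`, where `Λ` is regarded as a
DG ring with zero differential: a graded right `Λ`-module together with a square-zero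
`Λ`-linear differential of degree `-1`. -/
structure DGMod (P : C) where
  gm : GradedModule P
  d : ∀ {n m : ℤ}, m + 1 = n → (gm.M n →+ gm.M m)
  d_sq : ∀ {n m j : ℤ} (h : m + 1 = n) (h' : j + 1 = m) (x : gm.M n), d h' (d h x) = 0
  d_smul : ∀ {n m j l l' : ℤ} (h : m + 1 = n) (hl : n + j = l) (hl' : l' + 1 = l)
    (hm : m + j = l') (x : gm.M n) (a : lam P j),
    d hl' (gm.smul hl x a) = gm.smul hm (d h x) a

/-- A morphism of DG `Λ`-modules: a morphism of the underlying graded modules commuting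
with the differentials. -/
structure DGHom {P : C} (M N : DGMod P) where
  g : GHom M.gm N.gm
  comm : ∀ {n m : ℤ} (h : m + 1 = n) (x : M.gm.M n),
    g.app m (M.d h x) = N.d h (g.app n x)

@[ext] theorem DGHom.ext {P : C} {M N : DGMod P} {f f' : DGHom M N}
    (h : ∀ (n : ℤ) (x : M.gm.M n), f.g.app n x = f'.g.app n x) : f = f' := by
  obtain ⟨fg, _⟩ := f; obtain ⟨fg', _⟩ := f'
  congr 1
  exact GHom.ext h

/-- The category of differential graded right `Λ`-modules. -/
instance dgModCategory (P : C) : Category (DGMod P) where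
  Hom M N := DGHom M N
  id M := ⟨GHom.id _, fun _ _ => rfl⟩
  comp f g := ⟨g.g.comp f.g, fun h x => by
    show g.g.app _ (f.g.app _ _) = _
    rw [f.comm, g.comm]
    rfl⟩
  id_comp f := by apply DGHom.ext; intros; rfl
  comp_id f := by apply DGHom.ext; intros; rfl
  assoc f g h := by apply DGHom.ext; intros; rfl

/-- The cycles `ker dₙ` of a DG module in degree `n`. -/
abbrev cycles {P : C} (M : DGMod P) (n : ℤ) : AddSubgroup (M.gm.M n) :=
  AddMonoidHom.ker (M.d (n := n) (m := n - 1) (by omega))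

/-- The boundaries `im d_{n+1}` of a DG module in degree `n`. -/
abbrev boundaries {P : C} (M : DGMod P) (n : ℤ) : AddSubgroup (M.gm.M n) :=
  AddMonoidHom.range (M.d (n := n + 1) (m := n) rfl)

/-- The homology `H_n M = ker dₙ / im d_{n+1}` of a DG module. -/
abbrev dgHomology {P : C} (M : DGMod P) (n : ℤ) : Type v :=
  cycles M n ⧸ (boundaries M n).addSubgroupOf (cycles M n)

/-- The map induced on cycles by a morphism of DG modules. -/
def cyclesMap {P : C} {M N : DGMod P} (f : M ⟶ N) (n : ℤ) : cycles M n →+ cycles N n :=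
  AddMonoidHom.codRestrict ((f.g.app n).comp (cycles M n).subtype) _ (fun x => by
    have hx : M.d (show (n - 1) + 1 = n by omega) x.1 = 0 := x.2
    have : N.d (show (n - 1) + 1 = n by omega) (f.g.app n x.1) = 0 := by
      rw [← f.comm (show (n - 1) + 1 = n by omega), hx, map_zero]
    exact this)

/-- The map induced on homology by a morphism of DG modules. -/
def dgHomologyMap {P : C} {M N : DGMod P} (f : M ⟶ N) (n : ℤ) :
    dgHomology M n →+ dgHomology N n :=
  QuotientAddGroup.map _ _ (cyclesMap f n) (by
    intro x hx
    have hx' : x.1 ∈ boundaries M n := hx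
    obtain ⟨y, hy⟩ := AddMonoidHom.mem_range.mp hx'
    have : (f.g.app n x.1) ∈ boundaries N n := by
      refine AddMonoidHom.mem_range.mpr ⟨f.g.app (n + 1) y, ?_⟩
      rw [← f.comm rfl y, hy]
    exact this)

/-- A quasi-isomorphism of DG modules: a morphism inducing an isomorphism on homology. -/
def quasiIso (P : C) : MorphismProperty (DGMod P) :=
  fun _ _ f => ∀ n : ℤ, Function.Bijective (dgHomologyMap f n)

/-- The derived category `D(Λ)` of the graded endomorphism ring `Λ = End_T(P)_*`
(regarded as a DG ring with zero differential): the localization of the category of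
DG right `Λ`-modules at the quasi-isomorphisms. -/
abbrev DerivedCat (P : C) := (quasiIso P).Localization

end DG

/-!
Since `P` is compact, `π_*(∐ᵢ P⟦dᵢ⟧)` is the free `Λ`-module on generators of degrees `dᵢ`, so
for such free objects `Y` the map `Hom(Y, X) → Hom_Λ(π_*Y, π_*X)` is bijective, and so it is for
their retracts. Choose a free `Y` with `π_*Y → π_*F` onto; since `π_*F` is projective this
surjection splits, and the splitting is realised by an idempotent `e` of `Y`. Idempotents split
in `T`: the cone `Z` of `1 - shift` on the telescope `∐ₖ Y` of `e` is a summand of `Y`, because a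
`π_*`-isomorphism is an isomorphism when `P` generates. Then `Z → Y → F` is a
`π_*`-isomorphism, hence an isomorphism, and `F` is a retract of `Y`.
-/

section Comparison

variable (P : C)

theorem piGHom_comp {X Y Z : C} (f : X ⟶ Y) (g : Y ⟶ Z) :
    piGHom P (f ≫ g) = (piGHom P g).comp (piGHom P f) := by
  ext n u
  exact (Category.assoc u f g).symm

def PiHomBijective (Y : C) : Prop :=
  ∀ Z : C, Function.Bijective (fun f : Y ⟶ Z => piGHom P f)

variable {P}

theorem PiHomBijective.of_retract {F Y : C} (hY : PiHomBijective P Y) (i : F ⟶ Y) (r : Y ⟶ F)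
    (hir : i ≫ r = 𝟙 F) : PiHomBijective P F := by
  intro Z
  constructor
  · intro f f' h
    have hrf : r ≫ f = r ≫ f' := (hY Z).1 <| by
      simp only [piGHom_comp]
      exact congrArg (GHom.comp · (piGHom P r)) h
    simpa [← Category.assoc, hir] using congrArg (i ≫ ·) hrf
  · intro φ
    obtain ⟨g, hg⟩ := (hY Z).2 (φ.comp (piGHom P r))
    refine ⟨i ≫ g, GHom.ext fun n u => ?_⟩
    have hu : (u ≫ i) ≫ g = φ.app n ((u ≫ i) ≫ r) := congrArg (fun ψ => GHom.app ψ n (u ≫ i)) hg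
    change u ≫ i ≫ g = φ.app n u
    rw [← Category.assoc, hu, Category.assoc, hir, Category.comp_id]

theorem exists_idempotent_of_isProjective {Y F : C} (hY : PiHomBijective P Y) (q : Y ⟶ F)
    (hq : (piGHom P q).Surj) (hF : IsProjective (piMod P F)) :
    ∃ e : Y ⟶ Y, e ≫ e = e ∧ e ≫ q = q ∧ ∀ (n : ℤ) (v : P⟦n⟧ ⟶ Y), v ≫ q = 0 → v ≫ e = 0 := by
  obtain ⟨σ, hσ⟩ := hF _ _ (piGHom P q) hq (GHom.id _)
  obtain ⟨e, he⟩ := (hY Y).2 (σ.comp (piGHom P q))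
  have hve : ∀ (n : ℤ) (v : P⟦n⟧ ⟶ Y), v ≫ e = σ.app n (v ≫ q) :=
    fun n v => congrArg (fun ψ => GHom.app ψ n v) he
  have hσq : ∀ (n : ℤ) (y : P⟦n⟧ ⟶ F), σ.app n y ≫ q = y :=
    fun n y => congrArg (fun ψ => GHom.app ψ n y) hσ
  have heq : e ≫ q = q := (hY F).1 <| GHom.ext fun n v => by
    change v ≫ e ≫ q = v ≫ q
    rw [← Category.assoc, hve, hσq]
  refine ⟨e, (hY Y).1 (GHom.ext fun n v => ?_), heq, fun n v hv => by rw [hve, hv, map_zero]⟩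
  change v ≫ e ≫ e = v ≫ e
  rw [← Category.assoc, hve, Category.assoc, heq, ← hve]

end Comparison

section Triangles

variable (P : C)

noncomputable def shiftHomEquiv (a n m : ℤ) (h : n + a = m) (Y : C) :
    (P⟦n⟧ ⟶ Y) ≃+ (P⟦m⟧ ⟶ Y⟦a⟧) where
  toFun u := (shiftFunctorAdd' C n a m h).hom.app P ≫ u⟦a⟧'
  invFun v := (shiftFunctor C a).preimage ((shiftFunctorAdd' C n a m h).inv.app P ≫ v)
  left_inv u := (shiftFunctor C a).map_injective (by simp)
  right_inv v := by simp
  map_add' u v := by simp [Preadditive.comp_add]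

theorem shiftHomEquiv_comp (a n m : ℤ) (h : n + a = m) {Y Z : C} (u : P⟦n⟧ ⟶ Y) (f : Y ⟶ Z) :
    shiftHomEquiv P a n m h Z (u ≫ f) = shiftHomEquiv P a n m h Y u ≫ f⟦a⟧' := by
  simp [shiftHomEquiv]

theorem shiftHomEquiv_comp_eq_smul (a k m : ℤ) (h : k + a = m) {Z : C} (b : lam P k)
    (w : P⟦a⟧ ⟶ Z) : shiftHomEquiv P a k m h P b ≫ w = (piMod P Z).smul (by omega) w b :=
  Category.assoc _ _ _

variable {P}

theorem eq_zero_of_comp_shift_eq_zero {X Y : C} {f : X ⟶ Y}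
    (hf : ∀ (n : ℤ) (z : P⟦n⟧ ⟶ X), z ≫ f = 0 → z = 0) (a n : ℤ) (z : P⟦n⟧ ⟶ X⟦a⟧)
    (hz : z ≫ f⟦a⟧' = 0) : z = 0 := by
  let e := shiftHomEquiv P a (n - a) n (by omega) X
  have hz' : e.symm z ≫ f = 0 := by
    apply (shiftHomEquiv P a (n - a) n (by omega) Y).injective
    rw [shiftHomEquiv_comp, AddEquiv.apply_symm_apply, hz, map_zero]
  rw [← e.apply_symm_apply z, hf _ _ hz', map_zero]

theorem exists_comp_mor₂_eq_of_distTriang {T : Triangle C} (hT : T ∈ distTriang C)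
    (h₁ : ∀ (n : ℤ) (z : P⟦n⟧ ⟶ T.obj₁), z ≫ T.mor₁ = 0 → z = 0) (n : ℤ) (y : P⟦n⟧ ⟶ T.obj₃) :
    ∃ z, z ≫ T.mor₂ = y := by
  have hy : y ≫ T.mor₃ = 0 := eq_zero_of_comp_shift_eq_zero h₁ 1 n _ <| by
    rw [Category.assoc, comp_distTriang_mor_zero₃₁ _ hT, comp_zero]
  obtain ⟨z, hz⟩ := Triangle.coyoneda_exact₃ _ hT y hy
  exact ⟨z, hz.symm⟩

theorem isIso_of_piGHom_bijective (hgen : IsGenerator P) {X Y : C} (f : X ⟶ Y)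
    (hinj : ∀ (n : ℤ) (z : P⟦n⟧ ⟶ X), z ≫ f = 0 → z = 0) (hsurj : (piGHom P f).Surj) :
    IsIso f := by
  obtain ⟨D, a, b, hT⟩ := distinguished_cocone_triangle f
  refine (Triangle.isZero₃_iff_isIso₁ _ hT).1 (hgen D fun n u => ?_)
  obtain ⟨z, rfl⟩ := exists_comp_mor₂_eq_of_distTriang hT hinj n u
  obtain ⟨y, rfl⟩ := hsurj n z
  change (y ≫ f) ≫ a = 0
  rw [Category.assoc, show f ≫ a = 0 from comp_distTriang_mor_zero₁₂ _ hT, comp_zero]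

theorem eq_id_of_idempotent (hgen : IsGenerator P) {Z : C} (g : Z ⟶ Z) (hgg : g ≫ g = g)
    (hg : ∀ (n : ℤ) (z : P⟦n⟧ ⟶ Z), z ≫ g = z) : g = 𝟙 Z := by
  have : IsIso g := isIso_of_piGHom_bijective hgen g (fun n z hz => (hg n z).symm.trans hz)
    (fun n z => ⟨z, hg n z⟩)
  rwa [← cancel_epi g, Category.comp_id]

end Triangles

section Compact

variable [HasCoproducts.{v} C]

-- `compactComparison` is defined with classical decidability of equality on `ι`.
theorem compactComparison_of (W : C) {ι : Type v} [DecidableEq ι] (Y : ι → C) (i : ι)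
    (u : W ⟶ Y i) : compactComparison W Y (DirectSum.of _ i u) = u ≫ Sigma.ι Y i := by
  obtain rfl : ‹DecidableEq ι› = fun a b => Classical.propDecidable (a = b) :=
    Subsingleton.elim _ _
  simp [compactComparison]

theorem compactComparison_shift_surjective {P : C} (hP : IsCompactObj P) (n : ℤ) {ι : Type v}
    (Y : ι → C) : Function.Surjective (compactComparison (P⟦n⟧) Y) := by
  classical
  let adj : shiftFunctor C n ⊣ shiftFunctor C (-n) := (shiftEquiv C n).toAdjunction
  have key : ∀ y, ∃ x, adj.homAddEquiv P _ (compactComparison (P⟦n⟧) Y x) =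
      compactComparison P (fun i => (Y i)⟦-n⟧) y ≫ sigmaComparison (shiftFunctor C (-n)) Y := by
    intro y
    induction y using DirectSum.induction_on with
    | zero => exact ⟨0, by simp⟩
    | of i t =>
      refine ⟨DirectSum.of _ i ((adj.homAddEquiv P _).symm t), ?_⟩
      simp [compactComparison_of, Adjunction.homAddEquiv_apply,
        Adjunction.homEquiv_naturality_right, ι_comp_sigmaComparison]
    | add y y' hy hy' =>
      obtain ⟨x, hx⟩ := hy
      obtain ⟨x', hx'⟩ := hy'
      exact ⟨x + x', by rw [map_add, map_add, hx, hx', map_add, Preadditive.add_comp]⟩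
  intro v
  obtain ⟨y, hy⟩ :=
    (hP ι _).2 (adj.homAddEquiv P _ v ≫ inv (sigmaComparison (shiftFunctor C (-n)) Y))
  obtain ⟨x, hx⟩ := key y
  refine ⟨x, (adj.homAddEquiv P _).injective ?_⟩
  rw [hx, hy, Category.assoc, IsIso.inv_hom_id, Category.comp_id]

theorem compactComparison_comp_sigmaπ (W : C) {ι : Type v} [DecidableEq ι] (Y : ι → C)
    (x : ⨁ i, (W ⟶ Y i)) (j : ι) : compactComparison W Y x ≫ Sigma.π Y j = x j := by
  induction x using DirectSum.induction_on with
  | zero => simp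
  | of i u =>
    rw [compactComparison_of, Category.assoc]
    by_cases h : i = j
    · subst h
      simp
    · simp [Sigma.ι_π_of_ne _ h, DirectSum.of_eq_of_ne _ _ _ (Ne.symm h)]
  | add x x' hx hx' => simp [Preadditive.add_comp, hx, hx']

theorem eq_zero_of_comp_sigmaπ_eq_zero {P : C} (hP : IsCompactObj P) (n : ℤ) {ι : Type v}
    [DecidableEq ι] {Y : ι → C} (z : P⟦n⟧ ⟶ ∐ Y) (hz : ∀ j, z ≫ Sigma.π Y j = 0) : z = 0 := by
  obtain ⟨x, rfl⟩ := compactComparison_shift_surjective hP n Y z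
  have hx : x = 0 := DFinsupp.ext fun j => by rw [← compactComparison_comp_sigmaπ, hz]; rfl
  rw [hx, map_zero]

end Compact

section Free

variable [HasCoproducts.{v} C] {P : C}

theorem GHom.ext_sigma_shift (hP : IsCompactObj P) {ι : Type v} {d : ι → ℤ}
    {M : GradedModule P} {f g : GHom (piMod P (∐ fun i => P⟦d i⟧)) M}
    (h : ∀ i, f.app (d i) (Sigma.ι (fun i => P⟦d i⟧) i) =
      g.app (d i) (Sigma.ι (fun i => P⟦d i⟧) i)) : f = g := by
  classical
  ext n u
  obtain ⟨x, rfl⟩ := compactComparison_shift_surjective hP n _ u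
  induction x using DirectSum.induction_on with
  | zero => simp
  | of i v =>
    obtain ⟨b, rfl⟩ := (shiftHomEquiv P (d i) (n - d i) n (by omega) P).surjective v
    rw [compactComparison_of, shiftHomEquiv_comp_eq_smul, f.app_smul, g.app_smul, h]
  | add x x' hx hx' => simp only [map_add, hx, hx']

theorem piHomBijective_sigma_shift (hP : IsCompactObj P) {ι : Type v} (d : ι → ℤ) :
    PiHomBijective P (∐ fun i => P⟦d i⟧) := fun _ =>
  ⟨fun _ _ h => Sigma.hom_ext _ _ fun i =>
      congrArg (fun φ => GHom.app φ (d i) (Sigma.ι (fun i => P⟦d i⟧) i)) h,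
    fun φ => ⟨Sigma.desc fun i => φ.app (d i) (Sigma.ι (fun i => P⟦d i⟧) i),
      GHom.ext_sigma_shift hP fun _ => Sigma.ι_desc _ _⟩⟩

theorem exists_sigma_shift_piGHom_surj (F : C) : ∃ (ι : Type v) (d : ι → ℤ)
    (q : (∐ fun i => P⟦d i⟧) ⟶ F), (piGHom P q).Surj :=
  ⟨Σ n : ℤ, (P⟦n⟧ ⟶ F), fun y => y.1, Sigma.desc fun y => y.2,
    fun n y => ⟨Sigma.ι (fun y : Σ n : ℤ, (P⟦n⟧ ⟶ F) => P⟦y.1⟧) ⟨n, y⟩, Sigma.ι_desc _ _⟩⟩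

end Free

section Telescope

variable [HasCoproducts.{v} C] {P : C}

-- Indexed by `ULift ℕ` so that `HasCoproducts.{v} C` and `IsCompactObj` apply to it.
noncomputable abbrev telescope (Y : C) : C := ∐ fun _ : ULift.{v} ℕ => Y

noncomputable def telescopeι (Y : C) (k : ℕ) : Y ⟶ telescope Y :=
  Sigma.ι (fun _ : ULift.{v} ℕ => Y) ⟨k⟩

noncomputable def telescopeπ (Y : C) (k : ℕ) : telescope Y ⟶ Y :=
  Sigma.π (fun _ : ULift.{v} ℕ => Y) ⟨k⟩

theorem telescope_hom_ext {Y W : C} {f g : telescope Y ⟶ W}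
    (h : ∀ k, telescopeι Y k ≫ f = telescopeι Y k ≫ g) : f = g :=
  Sigma.hom_ext _ _ fun k => h k.down

theorem telescopeι_π (Y : C) (j k : ℕ) :
    telescopeι Y j ≫ telescopeπ Y k = if j = k then 𝟙 Y else 0 := by
  by_cases h : j = k
  · subst h
    simp [telescopeι, telescopeπ]
  · rw [if_neg h, telescopeι, telescopeπ, Sigma.ι_π_of_ne _ (by simpa using h)]

theorem eq_zero_of_comp_telescopeπ_eq_zero (hP : IsCompactObj P) {n : ℤ} {Y : C}
    (z : P⟦n⟧ ⟶ telescope Y) (hz : ∀ k, z ≫ telescopeπ Y k = 0) : z = 0 :=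
  eq_zero_of_comp_sigmaπ_eq_zero hP n z fun k => hz k.down

noncomputable def telescopeCodiag (Y : C) : telescope Y ⟶ Y :=
  Sigma.desc fun _ => 𝟙 Y

theorem telescopeι_codiag (Y : C) (k : ℕ) : telescopeι Y k ≫ telescopeCodiag Y = 𝟙 Y :=
  Sigma.ι_desc _ _

variable {Y : C} (e : Y ⟶ Y)

noncomputable def telescopeShift : telescope Y ⟶ telescope Y :=
  Sigma.desc fun k => e ≫ telescopeι Y (k.down + 1)

theorem telescopeι_shift (k : ℕ) :
    telescopeι Y k ≫ telescopeShift e = e ≫ telescopeι Y (k + 1) :=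
  Sigma.ι_desc _ _

theorem telescopeShift_π_zero : telescopeShift e ≫ telescopeπ Y 0 = 0 :=
  telescope_hom_ext fun k => by simp [reassoc_of% telescopeι_shift, telescopeι_π]

theorem telescopeShift_π_succ (k : ℕ) :
    telescopeShift e ≫ telescopeπ Y (k + 1) = telescopeπ Y k ≫ e :=
  telescope_hom_ext fun j => by
    by_cases h : j = k <;>
      simp [reassoc_of% telescopeι_shift, reassoc_of% telescopeι_π, telescopeι_π, h]

theorem eq_zero_of_comp_oneSub_telescopeShift (hP : IsCompactObj P) {n : ℤ}
    (z : P⟦n⟧ ⟶ telescope Y) (hz : z ≫ (𝟙 _ - telescopeShift e) = 0) : z = 0 := by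
  rw [Preadditive.comp_sub, Category.comp_id, sub_eq_zero] at hz
  refine eq_zero_of_comp_telescopeπ_eq_zero hP z fun k => ?_
  induction k with
  | zero => rw [hz, Category.assoc, telescopeShift_π_zero, comp_zero]
  | succ k ih => rw [hz, Category.assoc, telescopeShift_π_succ, ← Category.assoc, ih, zero_comp]

variable {e} {Z : C} {p : telescope Y ⟶ Z}

theorem telescopeι_comp_of_oneSub_comp (hp : (𝟙 _ - telescopeShift e) ≫ p = 0) (k : ℕ) :
    telescopeι Y k ≫ p = e ≫ telescopeι Y (k + 1) ≫ p := by
  simpa [Preadditive.sub_comp, sub_eq_zero, reassoc_of% telescopeι_shift] using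
    congrArg (telescopeι Y k ≫ ·) hp

theorem e_comp_telescopeι_comp (he : e ≫ e = e) (hp : (𝟙 _ - telescopeShift e) ≫ p = 0)
    (k : ℕ) : e ≫ telescopeι Y k ≫ p = telescopeι Y k ≫ p := by
  rw [telescopeι_comp_of_oneSub_comp hp, ← Category.assoc, he]

theorem telescopeι_comp_eq (he : e ≫ e = e) (hp : (𝟙 _ - telescopeShift e) ≫ p = 0)
    (k : ℕ) : telescopeι Y k ≫ p = telescopeι Y 0 ≫ p := by
  induction k with
  | zero => rfl
  | succ k ih => rw [← e_comp_telescopeι_comp he hp, ← telescopeι_comp_of_oneSub_comp hp, ih]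

theorem oneSub_telescopeShift_comp_codiag_comp (he : e ≫ e = e) :
    (𝟙 _ - telescopeShift e) ≫ telescopeCodiag Y ≫ e = 0 :=
  telescope_hom_ext fun k => by
    simp [Preadditive.comp_sub, reassoc_of% telescopeι_shift, reassoc_of% telescopeι_codiag, he]

theorem isIdempotentComplete (hP : IsCompactObj P) (hgen : IsGenerator P) :
    IsIdempotentComplete C := by
  refine ⟨fun Y e he => ?_⟩
  obtain ⟨Z, p, δ, hT⟩ := distinguished_cocone_triangle (𝟙 (telescope Y) - telescopeShift e)
  have hp : (𝟙 _ - telescopeShift e) ≫ p = 0 := comp_distTriang_mor_zero₁₂ _ hT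
  obtain ⟨i, hi⟩ : ∃ i : Z ⟶ Y, telescopeCodiag Y ≫ e = p ≫ i :=
    Triangle.yoneda_exact₂ _ hT _ (oneSub_telescopeShift_comp_codiag_comp he)
  have hri : telescopeι Y 0 ≫ p ≫ i = e := by rw [← hi, reassoc_of% telescopeι_codiag]
  have hpir : p ≫ i ≫ telescopeι Y 0 ≫ p = p := telescope_hom_ext fun k => by
    rw [reassoc_of% hi.symm, reassoc_of% telescopeι_codiag, e_comp_telescopeι_comp he hp,
      telescopeι_comp_eq he hp k]
  refine ⟨Z, i, telescopeι Y 0 ≫ p, eq_id_of_idempotent hgen _ ?_ fun n z => ?_,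
    by rw [Category.assoc, hri]⟩
  · simp only [Category.assoc]
    rw [reassoc_of% hri, e_comp_telescopeι_comp he hp]
  · obtain ⟨w, rfl⟩ := exists_comp_mor₂_eq_of_distTriang hT
      (fun _ z => eq_zero_of_comp_oneSub_telescopeShift e hP z) n z
    exact (Category.assoc _ _ _).trans (congrArg (w ≫ ·) hpir)

end Telescope

theorem statement_0_general [HasCoproducts.{v} C]
    (P : C) (hcpt : IsCompactObj P) (hgen : IsGenerator P)
    (F : C) (hproj : IsProjective (piMod P F)) (X : C) :
    Function.Bijective (fun f : F ⟶ X => piGHom P f) := by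
  obtain ⟨ι, d, q, hq⟩ := exists_sigma_shift_piGHom_surj (P := P) F
  have hfree := piHomBijective_sigma_shift hcpt d
  obtain ⟨e, hee, heq, hker⟩ := exists_idempotent_of_isProjective hfree q hq hproj
  obtain ⟨Z, i, r, hir, hri⟩ := (isIdempotentComplete hcpt hgen).idempotents_split _ e hee
  have : IsIso (i ≫ q) := by
    refine isIso_of_piGHom_bijective hgen _ (fun n z hz => ?_) (fun n y => ?_)
    · have hzie : (z ≫ i) ≫ e = 0 := hker n _ (by rwa [Category.assoc])
      calc z = ((z ≫ i) ≫ e) ≫ r := by simp [← hri, hir, reassoc_of% hir]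
        _ = 0 := by rw [hzie, zero_comp]
    · obtain ⟨v, rfl⟩ := hq n y
      exact ⟨v ≫ r, by
        change (v ≫ r) ≫ i ≫ q = v ≫ q
        rw [Category.assoc, reassoc_of% hri, heq]⟩
  exact hfree.of_retract (inv (i ≫ q) ≫ i) q (by simp) X

/-- If `P` is a compact generator of the triangulated category `C` and
`F` is an object such that `π_* F` is a projective graded right `Λ`-module, then for
every object `X` the map `Hom_T(F, X) → Hom_Λ(π_* F, π_* X)`, `f ↦ π_* f`, is bijective. -/
theorem statement_0 [IsTriangulated C] [HasCoproducts.{v} C]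
    (P : C) (hcpt : IsCompactObj P) (hgen : IsGenerator P)
    (F : C) (hproj : IsProjective (piMod P F)) (X : C) :
    Function.Bijective (fun f : F ⟶ X => piGHom P f) :=
  statement_0_general P hcpt hgen F hproj X

end Franke
end

section
/- Let T be a triangulated category with arbitrary small coproducts, P a compact generator of T, and suppose Λ is N-sparse. Let X, Y be objects of T such that proj dim π_*X ≤ 1, π_*X ∈ B[i] and π_*Y ∈ B[j], where the residues i, j ∈ ℤ/N satisfy j ≢ i (mod N) and j ≢ i+1 (mod N). Then Hom_T(X, Y) = 0. -/
/-!
Shared setup: a triangulated category `C` with (co)products, a compact generator `P`,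
the graded endomorphism ring `Λ = End_T(P)_* = Hom_T(Σ^* P, P)` and its category of
graded right modules, realized concretely.
-/

set_option linter.unusedSectionVars false

open CategoryTheory CategoryTheory.Limits CategoryTheory.Pretriangulated DirectSum

universe v u

namespace Franke

variable {C : Type u} [Category.{v} C] [Preadditive C] [HasZeroObject C]
  [HasShift C ℤ] [∀ n : ℤ, (shiftFunctor C n).Additive] [Pretriangulated C]

/-! A map `f : X ⟶ Y` is a ghost (zero on `π_*`) for degree reasons, as `j ≠ i`. Pick a
coproduct `Q` of shifts of `P` in degrees `≡ i` with `Q ⟶ X` surjective on `π_*` and complete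
it to a triangle `W → Q → X → W⟦1⟧`. Then `0 → π_* W → π_* Q → π_* X → 0` is exact, so `π_* W`
lies in `B[i]` and, by Schanuel's lemma and `proj dim π_* X ≤ 1`, is projective. Maps out of `Q`
are determined by their effect on `π_*`, so `f` kills `Q` and factors as `X → W⟦1⟧ → Y`; the
transposed map `W → Y⟦-1⟧` is again a ghost for degree reasons, as `j - 1 ≠ i`. Finally, a ghost
out of an object with projective `π_*` vanishes, because such an object is a retract of a
coproduct of shifts of `P`. -/

section GradedModules

variable {P : C}

@[simp] theorem GHom.comp_app {M N K : GradedModule P} (g : GHom N K) (f : GHom M N)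
    (n : ℤ) (x : M.M n) : (g.comp f).app n x = g.app n (f.app n x) := rfl

@[simp] theorem GHom.id_app {M : GradedModule P} (n : ℤ) (x : M.M n) :
    (GHom.id M).app n x = x := rfl

theorem GHom.congr_app {M N : GradedModule P} {f g : GHom M N} (h : f = g) (n : ℤ)
    (x : M.M n) : f.app n x = g.app n x := by
  rw [h]

@[simp] theorem GHom.sub_app {M N : GradedModule P} (f g : GHom M N) (n : ℤ) (x : M.M n) :
    (f - g).app n x = f.app n x - g.app n x := by
  rw [sub_eq_add_neg, GHom.add_app, GHom.neg_app, sub_eq_add_neg]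

theorem IsShortExact.exists_lift {Z E B M : GradedModule P} {ι : GHom Z E} {ρ : GHom E B}
    (hse : IsShortExact ι ρ) (g : GHom M E) (hg : ∀ n x, ρ.app n (g.app n x) = 0) :
    ∃ t : GHom M Z, ∀ n x, ι.app n (t.app n x) = g.app n x := by
  choose t ht using fun n x => (hse.exact n (g.app n x)).1 (hg n x)
  refine ⟨⟨fun n => AddMonoidHom.mk' (t n) fun x y => hse.mono n ?_, fun h x a => hse.mono _ ?_⟩,
    ht⟩
  · simp only [map_add, ht]
  · show ι.app _ (t _ _) = ι.app _ (Z.smul h (t _ x) a)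
    rw [ht, ι.app_smul, ht, g.app_smul]

theorem IsShortExact.exists_retraction {Z E B : GradedModule P} {ι : GHom Z E} {ρ : GHom E B}
    (hse : IsShortExact ι ρ) (hB : IsProjective B) :
    ∃ r : GHom E Z, ∀ n z, r.app n (ι.app n z) = z := by
  obtain ⟨s, hs⟩ := hB E B ρ hse.epi (GHom.id B)
  have hρs : ∀ n b, ρ.app n (s.app n b) = b := GHom.congr_app hs
  obtain ⟨r, hr⟩ := hse.exists_lift (GHom.id E - s.comp ρ) fun n x => by simp [hρs]
  refine ⟨r, fun n z => hse.mono n ?_⟩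
  rw [hr, GHom.sub_app, GHom.comp_app, (hse.exact n _).2 ⟨z, rfl⟩, map_zero, GHom.id_app,
    sub_zero]

/-- A form of Schanuel's lemma. -/
theorem IsShortExact.isProjective_of_projDimLE_one {Z E B : GradedModule P} {ι : GHom Z E}
    {ρ : GHom E B} (hse : IsShortExact ι ρ) (hE : IsProjective E) (hB : projDimLE 1 B) :
    IsProjective Z := by
  obtain ⟨F, K, ε, κ, hF, hseF, hK⟩ := hB
  have hK : IsProjective K := hK
  obtain ⟨l, hl⟩ := hF E B ρ hse.epi ε
  obtain ⟨s, hs⟩ := hE F B ε hseF.epi ρ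
  have hρl : ∀ n x, ρ.app n (l.app n x) = ε.app n x := GHom.congr_app hl
  have hεs : ∀ n x, ε.app n (s.app n x) = ρ.app n x := GHom.congr_app hs
  obtain ⟨s', hs'⟩ := hse.exists_lift (GHom.id E - l.comp s) fun n x => by simp [hρl, hεs]
  obtain ⟨l', hl'⟩ := hse.exists_lift (l.comp κ) fun n x => by
    simp [hρl, (hseF.exact n _).2 ⟨x, rfl⟩]
  obtain ⟨t, ht⟩ := hseF.exists_lift (s.comp ι) fun n x => by
    simp [hεs, (hse.exact n _).2 ⟨x, rfl⟩]
  -- `Z` is a retract of `K ⊕ E` through `(t, ι)` and `l' + s'`.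
  have hsplit : ∀ n z, l'.app n (t.app n z) + s'.app n (ι.app n z) = z := fun n z => by
    apply hse.mono n
    simp only [map_add, hl', hs', GHom.comp_app, ht, GHom.sub_app, GHom.id_app]
    abel
  intro A B' e he f
  obtain ⟨a, ha⟩ := hK A B' e he (f.comp l')
  obtain ⟨b, hb⟩ := hE A B' e he (f.comp s')
  refine ⟨a.comp t + b.comp ι, GHom.ext fun n z => ?_⟩
  have ha' := GHom.congr_app ha n (t.app n z)
  have hb' := GHom.congr_app hb n (ι.app n z)
  simp only [GHom.comp_app] at ha' hb'
  rw [GHom.comp_app, GHom.add_app, GHom.comp_app, GHom.comp_app, map_add, ha', hb', ← map_add,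
    hsplit]

end GradedModules

section ShiftedGenerator

variable (P : C)

theorem piGHom_app {X Y : C} (φ : X ⟶ Y) (n : ℤ) (x : P⟦n⟧ ⟶ X) :
    (piGHom P φ).app n x = x ≫ φ := rfl

noncomputable def toLam {n d : ℤ} (u : P⟦n⟧ ⟶ P⟦d⟧) : lam P (n - d) :=
  (shiftFunctor C d).preimage ((shiftFunctorAdd' C (n - d) d n (by omega)).inv.app P ≫ u)

theorem gsmulHom_toLam {Y : C} {n d : ℤ} (u : P⟦n⟧ ⟶ P⟦d⟧) (y : P⟦d⟧ ⟶ Y)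
    (h : d + (n - d) = n) : gsmulHom P h y (toLam P u) = u ≫ y := by
  simp [gsmulHom, toLam]

theorem toLam_add {n d : ℤ} (u u' : P⟦n⟧ ⟶ P⟦d⟧) :
    toLam P (u + u') = toLam P u + toLam P u' :=
  (shiftFunctor C d).map_injective (by simp [toLam, Preadditive.comp_add])

theorem toLam_gsmulHom {n d k l : ℤ} (u : P⟦n⟧ ⟶ P⟦d⟧) (a : lam P k) (h : n + k = l) :
    toLam P (gsmulHom P h u a) = gmul P (show (n - d) + k = l - d by omega) (toLam P u) a := by
  apply (shiftFunctor C d).map_injective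
  apply (cancel_epi ((shiftFunctorAdd' C (l - d) d l (by omega)).hom.app P)).1
  have := (piMod P (P⟦d⟧)).smul_mulₓ (show d + (n - d) = n by omega)
    (show (n - d) + k = l - d by omega) h (show d + (l - d) = l by omega) (𝟙 _) (toLam P u) a
  simp only [piMod, gsmulHom_toLam, Category.comp_id] at this
  simpa [gsmulHom, toLam] using this

theorem eq_zero_of_sparse {N : ℕ} (hsp : Sparse P N) {n d : ℤ} (h : ¬ (N : ℤ) ∣ n - d)
    (u : P⟦n⟧ ⟶ P⟦d⟧) : u = 0 := by
  rw [← Category.comp_id u, ← gsmulHom_toLam P u _ (by omega), hsp _ h (toLam P u)]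
  simp [gsmulHom]

theorem GHom.app_comp {A : C} {M : GradedModule P} (α : GHom (piMod P A) M) {n d : ℤ}
    (u : P⟦n⟧ ⟶ P⟦d⟧) (y : P⟦d⟧ ⟶ A) :
    α.app n (u ≫ y) = M.smul (show d + (n - d) = n by omega) (α.app d y) (toLam P u) := by
  rw [← α.app_smul]
  exact congrArg (α.app n) (gsmulHom_toLam P u y (by omega)).symm

end ShiftedGenerator

section Ghosts

def IsGhost (P : C) {A B : C} (φ : A ⟶ B) : Prop := ∀ (n : ℤ) (x : P⟦n⟧ ⟶ A), x ≫ φ = 0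

variable {P : C}

theorem InDegrees.shift {N : ℕ} {j : ZMod N} {Y : C} (hY : InDegrees N j (piMod P Y)) (t : ℤ) :
    InDegrees N (j + t) (piMod P (Y⟦t⟧)) := by
  intro n hn x
  set y := (shiftFunctor C t).preimage ((shiftFunctorAdd' C (n - t) t n (by omega)).inv.app P ≫ x)
  have hx : x = (shiftFunctorAdd' C (n - t) t n (by omega)).hom.app P ≫ y⟦t⟧' := by
    simp [y]
  rw [hx, hY (n - t) (fun h => hn (by rw [← h]; push_cast; ring)) y]
  simp

theorem IsGhost.precomp {A B D : C} {φ : B ⟶ D} (hφ : IsGhost P φ) (ψ : A ⟶ B) :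
    IsGhost P (ψ ≫ φ) := fun n x => by rw [← Category.assoc, hφ]

theorem isGhost_of_inDegrees {N : ℕ} {i j : ZMod N} {A B : C} (hA : InDegrees N i (piMod P A))
    (hB : InDegrees N j (piMod P B)) (hij : i ≠ j) (φ : A ⟶ B) : IsGhost P φ := by
  intro n x
  by_cases hn : (n : ZMod N) = i
  · exact hB n (hn ▸ hij) (x ≫ φ)
  · rw [hA n hn x, zero_comp]

theorem isShortExact_piGHom_of_distTriang {T : Triangle C} (hT : T ∈ distTriang C)
    (hsurj : (piGHom P T.mor₂).Surj) : IsShortExact (piGHom P T.mor₁) (piGHom P T.mor₂) where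
  mono n := by
    rw [injective_iff_map_eq_zero]
    intro x hx
    rw [piGHom_app] at hx
    -- `x⟦1⟧` is killed by `mor₁⟦1⟧`, so it factors through `mor₃`, which is a ghost.
    obtain ⟨g, hg⟩ := Triangle.coyoneda_exact₁ T hT
      ((shiftFunctorAdd' C n 1 (n + 1) rfl).hom.app P ≫ x⟦(1 : ℤ)⟧')
      (by rw [Category.assoc, ← Functor.map_comp, hx, Functor.map_zero, comp_zero])
    obtain ⟨y, rfl⟩ := hsurj (n + 1) g
    rw [piGHom_app, Category.assoc, comp_distTriang_mor_zero₂₃ T hT, comp_zero,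
      ← cancel_epi ((shiftFunctorAdd' C n 1 (n + 1) rfl).inv.app P)] at hg
    apply (shiftFunctor C (1 : ℤ)).map_injective
    simpa using hg
  epi := hsurj
  exact n x := by
    refine ⟨fun hx => ?_, ?_⟩
    · obtain ⟨y, rfl⟩ := Triangle.coyoneda_exact₂ T hT x hx
      exact ⟨y, rfl⟩
    · rintro ⟨y, rfl⟩
      simp [piGHom, comp_distTriang_mor_zero₁₂ T hT]

theorem isIso_of_bijective_piGHom (hgen : IsGenerator P) {A B : C} (φ : A ⟶ B)
    (hφ : ∀ n, Function.Bijective ((piGHom P φ).app n)) : IsIso φ := by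
  obtain ⟨Z, a, c, hT⟩ := distinguished_cocone_triangle₁ φ
  have hses := isShortExact_piGHom_of_distTriang hT fun n => (hφ n).2
  have haφ : a ≫ φ = 0 := comp_distTriang_mor_zero₁₂ _ hT
  refine (Triangle.isZero₁_iff_isIso₂ _ hT).1 (hgen Z fun n x => ?_)
  have hxa : x ≫ a = 0 := (injective_iff_map_eq_zero _).1 (hφ n).1 _ (by
    rw [piGHom_app, Category.assoc, haφ, comp_zero])
  exact (injective_iff_map_eq_zero _).1 (hses.mono n) x hxa

end Ghosts

section FreeObjects

noncomputable def shiftHomAddEquiv (A Y : C) (n : ℤ) : (A⟦n⟧ ⟶ Y) ≃+ (A ⟶ Y⟦-n⟧) where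
  toFun u := (shiftFunctorCompIsoId C n (-n) (add_neg_cancel n)).inv.app A ≫ u⟦-n⟧'
  invFun v := (shiftFunctor C (-n)).preimage
    ((shiftFunctorCompIsoId C n (-n) (add_neg_cancel n)).hom.app A ≫ v)
  left_inv u := by simp
  right_inv v := by simp
  map_add' u v := by simp

theorem compactComparison_of_s8 [HasCoproducts.{v} C] (P : C) {κ : Type v} [DecidableEq κ]
    (X : κ → C) (k : κ) (u : P ⟶ X k) :
    compactComparison P X (DirectSum.of (fun k => P ⟶ X k) k u) = u ≫ Sigma.ι X k := by
  unfold compactComparison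
  exact DirectSum.toAddMonoid_of _ _ _

theorem IsCompactObj.shift [HasCoproducts.{v} C] {P : C} (hP : IsCompactObj P) (n : ℤ) :
    IsCompactObj (P⟦n⟧) := by
  classical
  intro κ X
  let e := fun Y => shiftHomAddEquiv P Y n
  have key : ∀ z, e _ (compactComparison (P⟦n⟧) X z) =
      compactComparison P (fun k => (X k)⟦-n⟧) (DFinsupp.mapRange.addEquiv (fun k => e (X k)) z)
        ≫ sigmaComparison (shiftFunctor C (-n)) X := by
    intro z
    induction z using DirectSum.induction_on with
    | zero => simp
    | of k u =>
      have hk : DFinsupp.mapRange.addEquiv (fun k => e (X k)) (DirectSum.of _ k u) =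
          DirectSum.of (fun k => P ⟶ (X k)⟦-n⟧) k (e (X k) u) :=
        DFinsupp.mapRange_single (hf := fun k => map_zero _)
      rw [hk, compactComparison_of_s8, compactComparison_of_s8, Category.assoc, ι_comp_sigmaComparison]
      simp [e, shiftHomAddEquiv]
    | add z z' hz hz' => simp only [map_add, hz, hz', Preadditive.add_comp]
  rw [← (e _).bijective.of_comp_iff', show ⇑(e _) ∘ ⇑(compactComparison (P⟦n⟧) X) =
    (· ≫ sigmaComparison (shiftFunctor C (-n)) X) ∘ compactComparison P _ ∘
      DFinsupp.mapRange.addEquiv (fun k => e (X k)) from funext key]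
  refine Function.Bijective.comp ?_ ((hP κ _).comp (DFinsupp.mapRange.addEquiv _).bijective)
  exact ⟨fun x y h => (cancel_mono _).1 h, fun y => ⟨y ≫ inv (sigmaComparison _ X), by simp⟩⟩

variable (P : C) {κ : Type v} (deg : κ → ℤ)

/-- `π_*` of `∐ₖ P⟦deg k⟧` is the free graded `Λ`-module on generators in degrees `deg k`. -/
noncomputable abbrev freeObj [HasCoproducts.{v} C] : C := ∐ fun k => P⟦deg k⟧

variable [HasCoproducts.{v} C]

noncomputable abbrev freeObj.ι (k : κ) : P⟦deg k⟧ ⟶ freeObj P deg :=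
  Sigma.ι (fun k => P⟦deg k⟧) k

theorem freeObj_hom_induction (hcpt : IsCompactObj P) {n : ℤ}
    {p : (P⟦n⟧ ⟶ freeObj P deg) → Prop} (zero : p 0) (add : ∀ x y, p x → p y → p (x + y))
    (gen : ∀ k (u : P⟦n⟧ ⟶ P⟦deg k⟧), p (u ≫ freeObj.ι P deg k)) (x : P⟦n⟧ ⟶ freeObj P deg) :
    p x := by
  classical
  obtain ⟨z, rfl⟩ := (hcpt.shift n κ _).2 x
  induction z using DirectSum.induction_on with
  | zero => simpa using zero
  | of k u => rw [compactComparison_of_s8]; exact gen k u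
  | add z z' hz hz' => rw [map_add]; exact add _ _ hz hz'

theorem freeObj_ghom_ext (hcpt : IsCompactObj P) {M : GradedModule P}
    {α β : GHom (piMod P (freeObj P deg)) M}
    (h : ∀ k, α.app (deg k) (freeObj.ι P deg k) = β.app (deg k) (freeObj.ι P deg k)) :
    α = β := by
  ext n x
  induction x using freeObj_hom_induction P deg hcpt with
  | zero => rw [map_zero, map_zero]
  | add x y hx hy => rw [map_add, map_add, hx, hy]
  | gen k u => rw [GHom.app_comp, GHom.app_comp, h]

theorem exists_ghom_freeObj (hcpt : IsCompactObj P) (A : GradedModule P)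
    (a : ∀ k, A.M (deg k)) :
    ∃ g : GHom (piMod P (freeObj P deg)) A, ∀ k (n : ℤ) (u : P⟦n⟧ ⟶ P⟦deg k⟧),
      g.app n (u ≫ freeObj.ι P deg k) =
        A.smul (show deg k + (n - deg k) = n by omega) (a k) (toLam P u) := by
  classical
  let decomp := fun n => AddEquiv.ofBijective _ (hcpt.shift n κ fun k => P⟦deg k⟧)
  let g := fun n => (DirectSum.toAddMonoid fun k => AddMonoidHom.mk'
      (fun u => A.smul (show deg k + (n - deg k) = n by omega) (a k) (toLam P u))
      fun u u' => by rw [toLam_add, A.smul_addₓ]).comp (decomp n).symm.toAddMonoidHom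
  have hg : ∀ k n (u : P⟦n⟧ ⟶ P⟦deg k⟧), g n (u ≫ freeObj.ι P deg k) =
      A.smul (show deg k + (n - deg k) = n by omega) (a k) (toLam P u) := by
    intro k n u
    rw [← compactComparison_of_s8 (P⟦n⟧) (fun k => P⟦deg k⟧) k u]
    exact congrArg (DirectSum.toAddMonoid _) ((decomp n).symm_apply_apply _) |>.trans
      (DirectSum.toAddMonoid_of _ _ _)
  refine ⟨⟨g, fun {n b l} h x c => ?_⟩, hg⟩
  induction x using freeObj_hom_induction P deg hcpt with
  | zero => simp [gsmulHom, A.zero_smulₓ]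
  | add x y hx hy =>
    rw [(piMod P _).add_smulₓ, map_add, map_add, hx, hy, A.add_smulₓ]
  | gen k u =>
    have hu : (piMod P (freeObj P deg)).smul h (u ≫ freeObj.ι P deg k) c =
        gsmulHom P h u c ≫ freeObj.ι P deg k := by simp [gsmulHom]
    rw [hu, hg, hg, toLam_gsmulHom, A.smul_mulₓ]

theorem freeObj_isProjective (hcpt : IsCompactObj P) :
    IsProjective (piMod P (freeObj P deg)) := by
  intro A B e he f
  choose a ha using fun k => he (deg k) (f.app (deg k) (freeObj.ι P deg k))
  obtain ⟨g, hg⟩ := exists_ghom_freeObj P deg hcpt A a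
  refine ⟨g, freeObj_ghom_ext P deg hcpt fun k => ?_⟩
  rw [← Category.id_comp (freeObj.ι P deg k), GHom.comp_app, hg, e.app_smul, ha, ← GHom.app_comp]

theorem freeObj_eq_zero_of_isGhost {Y : C} {φ : freeObj P deg ⟶ Y} (hφ : IsGhost P φ) :
    φ = 0 :=
  Sigma.hom_ext _ _ fun k => by simpa using hφ _ (freeObj.ι P deg k)

theorem exists_hom_freeObj (hcpt : IsCompactObj P) {Y : C}
    (α : GHom (piMod P (freeObj P deg)) (piMod P Y)) : ∃ φ : freeObj P deg ⟶ Y, piGHom P φ = α :=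
  ⟨Sigma.desc fun k => α.app _ (freeObj.ι P deg k),
    freeObj_ghom_ext P deg hcpt fun k => by rw [piGHom_app, Sigma.ι_desc]⟩

theorem freeObj_inDegrees (hcpt : IsCompactObj P) {N : ℕ} (hsp : Sparse P N) {i : ZMod N}
    (hdeg : ∀ k, (deg k : ZMod N) = i) : InDegrees N i (piMod P (freeObj P deg)) := by
  intro n hn x
  induction x using freeObj_hom_induction P deg hcpt with
  | zero => rfl
  | add x y hx hy => rw [hx, hy, add_zero]
  | gen k u =>
    rw [eq_zero_of_sparse P hsp (fun hdvd => hn ?_) u, zero_comp]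
    rw [← hdeg k, ← sub_eq_zero, ← Int.cast_sub, ZMod.intCast_zmod_eq_zero_iff_dvd]
    exact hdvd

theorem exists_freeObj_cover (M : C) :
    ∃ (κ : Type v) (deg : κ → ℤ) (q : freeObj P deg ⟶ M),
      (piGHom P q).Surj ∧ ∀ k, ∃ y : P⟦deg k⟧ ⟶ M, y ≠ 0 := by
  classical
  let κ := {p : Σ n : ℤ, (P⟦n⟧ ⟶ M) // p.2 ≠ 0}
  refine ⟨κ, fun k => k.1.1, Sigma.desc fun k => k.1.2, fun n y => ?_, fun k => ⟨_, k.2⟩⟩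
  by_cases hy : y = 0
  · exact ⟨0, by rw [hy, map_zero]⟩
  · exact ⟨Sigma.ι (fun k : κ => P⟦k.1.1⟧) ⟨⟨n, y⟩, hy⟩, Sigma.ι_desc _ _⟩

end FreeObjects

theorem eq_zero_of_isGhost [HasCoproducts.{v} C] {P : C} (hcpt : IsCompactObj P)
    (hgen : IsGenerator P) {W Y : C} (hW : IsProjective (piMod P W)) {φ : W ⟶ Y}
    (hφ : IsGhost P φ) : φ = 0 := by
  obtain ⟨κ, deg, q, hq, -⟩ := exists_freeObj_cover P W
  obtain ⟨V, v, δ, hT⟩ := distinguished_cocone_triangle₁ q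
  have hses := isShortExact_piGHom_of_distTriang hT hq
  -- `π_* q` splits, and its retraction is realized by a map `ρ`, making `v` a split mono.
  obtain ⟨r, hr⟩ := hses.exists_retraction hW
  obtain ⟨ρ, rfl⟩ := exists_hom_freeObj P deg hcpt r
  have hvρ : ∀ n (x : P⟦n⟧ ⟶ V), x ≫ v ≫ ρ = x := fun n x => by
    rw [← Category.assoc]; exact hr n x
  have : IsIso (v ≫ ρ) := isIso_of_bijective_piGHom hgen _ fun n =>
    ⟨fun x y hxy => by rw [← hvρ n x, ← hvρ n y]; exact hxy, fun y => ⟨y, hvρ n y⟩⟩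
  have : Mono v := mono_of_mono v ρ
  have : Epi q := Triangle.epi₂ _ hT (Triangle.mor₃_eq_zero_of_mono₁ _ hT this)
  rw [← cancel_epi q, comp_zero]
  exact freeObj_eq_zero_of_isGhost P deg (hφ.precomp q)

theorem statement_8_general [HasCoproducts.{v} C]
    (P : C) (hcpt : IsCompactObj P) (hgen : IsGenerator P)
    (N : ℕ) (hsp : Sparse P N)
    (i j : ZMod N) (X Y : C) (hpd : projDimLE 1 (piMod P X))
    (hX : InDegrees N i (piMod P X)) (hY : InDegrees N j (piMod P Y))
    (hji : j ≠ i) (hji' : j ≠ i + 1) :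
    ∀ f : X ⟶ Y, f = 0 := by
  intro f
  obtain ⟨κ, deg, g, hg, hdeg⟩ := exists_freeObj_cover P X
  have hQ : InDegrees N i (piMod P (freeObj P deg)) := freeObj_inDegrees P deg hcpt hsp fun k => by
    obtain ⟨y, hy⟩ := hdeg k
    by_contra hk
    exact hy (hX _ hk y)
  obtain ⟨W, a, δ, hT⟩ := distinguished_cocone_triangle₁ g
  have hses := isShortExact_piGHom_of_distTriang hT hg
  obtain ⟨h, rfl⟩ := Triangle.yoneda_exact₃ _ hT f
    (freeObj_eq_zero_of_isGhost P deg ((isGhost_of_inDegrees hX hY hji.symm f).precomp g))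
  have hW : InDegrees N i (piMod P W) := fun n hn x =>
    (injective_iff_map_eq_zero _).1 (hses.mono n) x (hQ n hn _)
  have hWproj := hses.isProjective_of_projDimLE_one (freeObj_isProjective P deg hcpt) hpd
  -- `h : W⟦1⟧ ⟶ Y` vanishes with its transpose `W ⟶ Y⟦-1⟧`, a ghost for degree reasons.
  have hh : (shiftFunctorCompIsoId C (1 : ℤ) (-1) (by omega)).inv.app W ≫ h⟦(-1 : ℤ)⟧' = 0 :=
    eq_zero_of_isGhost hcpt hgen hWproj (isGhost_of_inDegrees hW (hY.shift (-1)) (fun hij =>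
      hji' (by rw [hij]; push_cast; ring)) _)
  rw [Preadditive.IsIso.comp_left_eq_zero, ← Functor.map_zero (shiftFunctor C (-1 : ℤ))] at hh
  rw [(shiftFunctor C (-1 : ℤ)).map_injective hh]
  exact comp_zero

/-- Let `P` be a compact generator of the triangulated category `C`
with `Λ` `N`-sparse, and let `X, Y` be objects with `proj dim π_* X ≤ 1`,
`π_* X ∈ B[i]` and `π_* Y ∈ B[j]` where `j ≠ i` and `j ≠ i + 1` in `ℤ/N`. Then
`Hom_T(X, Y) = 0`. -/
theorem statement_8 [IsTriangulated C] [HasCoproducts.{v} C]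
    (P : C) (hcpt : IsCompactObj P) (hgen : IsGenerator P)
    (N : ℕ) (hN : 2 ≤ N) (hsp : Sparse P N)
    (i j : ZMod N) (X Y : C) (hpd : projDimLE 1 (piMod P X))
    (hX : InDegrees N i (piMod P X)) (hY : InDegrees N j (piMod P Y))
    (hji : j ≠ i) (hji' : j ≠ i + 1) :
    ∀ f : X ⟶ Y, f = 0 :=
  statement_8_general P hcpt hgen N hsp i j X Y hpd hX hY hji hji'

end Franke
end
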